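/- The function p ↦ (σ(E)^{−1} Mod_{p,σ}(Γ))^{1/p} is nondecreasing on [1,∞): for 1 ≤ p₁ ≤ p₂ < ∞, (σ(E)^{−1} Mod_{p₁,σ}(Γ))^{1/p₁} ≤ (σ(E)^{−1} Mod_{p₂,σ}(Γ))^{1/p₂}, where σ(E) = Σ_{e∈E} σ(e). -/

import Mathlib

open Finset

noncomputable section

/-- A density `ρ` is admissible for the usage matrix `N` if it is nonnegative and
every object has `ρ`-length at least 1. -/
def IsAdmissible {E Γ : Type*} [Fintype E] (N : Γ → E → ℝ) (ρ : E → ℝ) : Prop :=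
  (∀ e, 0 ≤ ρ e) ∧ ∀ γ : Γ, 1 ≤ ∑ e, N γ e * ρ e

/-- The `p`-energy of a density. -/
def pEnergy {E : Type*} [Fintype E] (σ : E → ℝ) (p : ℝ) (ρ : E → ℝ) : ℝ :=
  ∑ e, σ e * ρ e ^ p

/-- The `p`-modulus: the infimum of the `p`-energy over admissible densities. -/
def pModulus {E Γ : Type*} [Fintype E] (N : Γ → E → ℝ) (σ : E → ℝ) (p : ℝ) : ℝ :=
  sInf {x | ∃ ρ : E → ℝ, IsAdmissible N ρ ∧ x = pEnergy σ p ρ}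

/-!
Normalising by `σ(E)` turns `σ` into a probability measure on `E`, and for a fixed density `ρ`
the quantity `(σ(E)⁻¹ E_{p,σ}(ρ))^{1/p}` is the `L^p` norm of `ρ` for that measure, which is
nondecreasing in `p` by Jensen's inequality for `t ↦ t^{p₂/p₁}`. Since the admissible densities do
not depend on `p`, the inequality survives the passage to the infimum over them.
-/

theorem rpow_weighted_mean_le_weighted_mean_rpow {ι : Type*} (s : Finset ι) {w x : ι → ℝ}
    (hw : ∀ i ∈ s, 0 ≤ w i) (hx : ∀ i ∈ s, 0 ≤ x i) {q : ℝ} (hq : 1 ≤ q) :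
    ((∑ i ∈ s, w i)⁻¹ * ∑ i ∈ s, w i * x i) ^ q ≤ (∑ i ∈ s, w i)⁻¹ * ∑ i ∈ s, w i * x i ^ q := by
  rcases (sum_nonneg hw).eq_or_lt with hS | hS
  · simp [← hS, Real.zero_rpow (by positivity : q ≠ 0)]
  · exact (convexOn_rpow hq).map_centerMass_le hw hS hx

section Modulus

variable {E Γ : Type*} [Fintype E] {N : Γ → E → ℝ} {σ : E → ℝ}

theorem pEnergy_nonneg (hσ : ∀ e, 0 ≤ σ e) {ρ : E → ℝ} (hρ : ∀ e, 0 ≤ ρ e) (p : ℝ) :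
    0 ≤ pEnergy σ p ρ :=
  sum_nonneg fun e _ => mul_nonneg (hσ e) (Real.rpow_nonneg (hρ e) p)

theorem rpow_normalized_pEnergy_le (hσ : ∀ e, 0 ≤ σ e) {ρ : E → ℝ} (hρ : ∀ e, 0 ≤ ρ e)
    {p₁ p₂ : ℝ} (hp₁ : 0 < p₁) (hp₁₂ : p₁ ≤ p₂) :
    ((∑ e, σ e)⁻¹ * pEnergy σ p₁ ρ) ^ (p₂ / p₁) ≤ (∑ e, σ e)⁻¹ * pEnergy σ p₂ ρ := by
  have hpow : ∀ e, (ρ e ^ p₁) ^ (p₂ / p₁) = ρ e ^ p₂ := fun e => by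
    rw [← Real.rpow_mul (hρ e), mul_div_cancel₀ _ hp₁.ne']
  simpa only [pEnergy, hpow] using
    rpow_weighted_mean_le_weighted_mean_rpow univ (fun e _ => hσ e)
      (fun e _ => Real.rpow_nonneg (hρ e) p₁) ((one_le_div hp₁).mpr hp₁₂)

theorem pModulus_nonneg (hσ : ∀ e, 0 ≤ σ e) (p : ℝ) : 0 ≤ pModulus N σ p :=
  Real.sInf_nonneg <| by
    rintro _ ⟨ρ, hρ, rfl⟩
    exact pEnergy_nonneg hσ hρ.1 p

theorem pModulus_le_pEnergy (hσ : ∀ e, 0 ≤ σ e) {ρ : E → ℝ} (hρ : IsAdmissible N ρ) (p : ℝ) :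
    pModulus N σ p ≤ pEnergy σ p ρ :=
  csInf_le ⟨0, by rintro _ ⟨ρ', hρ', rfl⟩; exact pEnergy_nonneg hσ hρ'.1 p⟩ ⟨ρ, hρ, rfl⟩

theorem le_mul_pModulus {a c p : ℝ} (hc : 0 ≤ c) (hadm : ∃ ρ, IsAdmissible N ρ)
    (h : ∀ ρ, IsAdmissible N ρ → a ≤ c * pEnergy σ p ρ) : a ≤ c * pModulus N σ p := by
  obtain ⟨ρ₀, hρ₀⟩ := hadm
  rw [pModulus, ← smul_eq_mul, ← Real.sInf_smul_of_nonneg hc]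
  refine le_csInf ⟨_, Set.smul_mem_smul_set ⟨ρ₀, hρ₀, rfl⟩⟩ ?_
  rintro _ ⟨_, ⟨ρ, hρ, rfl⟩, rfl⟩
  exact h ρ hρ

theorem exists_isAdmissible [Fintype Γ] (hN : ∀ γ e, 0 ≤ N γ e) (hrow : ∀ γ, ∃ e, 0 < N γ e) :
    ∃ ρ : E → ℝ, IsAdmissible N ρ := by
  have hrowSum : ∀ γ, 0 < ∑ e, N γ e := fun γ =>
    let ⟨e, he⟩ := hrow γ
    sum_pos' (fun e _ => hN γ e) ⟨e, mem_univ e, he⟩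
  set c := ∑ γ, (∑ e, N γ e)⁻¹
  have hc : 0 ≤ c := sum_nonneg fun γ _ => (inv_pos.mpr (hrowSum γ)).le
  refine ⟨fun _ => c, fun _ => hc, fun γ => ?_⟩
  have hinv_le : (∑ e, N γ e)⁻¹ ≤ c :=
    single_le_sum (fun γ _ => (inv_pos.mpr (hrowSum γ)).le) (mem_univ γ)
  calc (1 : ℝ) = (∑ e, N γ e) * (∑ e, N γ e)⁻¹ := (mul_inv_cancel₀ (hrowSum γ).ne').symm
    _ ≤ (∑ e, N γ e) * c := mul_le_mul_of_nonneg_left hinv_le (hrowSum γ).le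
    _ = ∑ e, N γ e * c := sum_mul ..

theorem rpow_normalized_pModulus_le [Fintype Γ] (hN : ∀ γ e, 0 ≤ N γ e)
    (hrow : ∀ γ, ∃ e, 0 < N γ e) (hσ : ∀ e, 0 ≤ σ e) {p₁ p₂ : ℝ} (hp₁ : 0 < p₁)
    (hp₁₂ : p₁ ≤ p₂) :
    ((∑ e, σ e)⁻¹ * pModulus N σ p₁) ^ (p₂ / p₁) ≤ (∑ e, σ e)⁻¹ * pModulus N σ p₂ := by
  have hS : 0 ≤ (∑ e, σ e)⁻¹ := inv_nonneg.mpr (sum_nonneg fun e _ => hσ e)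
  refine le_mul_pModulus hS (exists_isAdmissible hN hrow) fun ρ hρ => ?_
  calc ((∑ e, σ e)⁻¹ * pModulus N σ p₁) ^ (p₂ / p₁)
      ≤ ((∑ e, σ e)⁻¹ * pEnergy σ p₁ ρ) ^ (p₂ / p₁) := by
        refine Real.rpow_le_rpow (mul_nonneg hS (pModulus_nonneg hσ p₁)) ?_
          (div_pos (hp₁.trans_le hp₁₂) hp₁).le
        exact mul_le_mul_of_nonneg_left (pModulus_le_pEnergy hσ hρ p₁) hS
    _ ≤ (∑ e, σ e)⁻¹ * pEnergy σ p₂ ρ := rpow_normalized_pEnergy_le hσ hρ.1 hp₁ hp₁₂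

end Modulus

theorem modulus_normalized_monotone_general
    {E Γ : Type*} [Fintype E] [Fintype Γ]
    (N : Γ → E → ℝ) (hN : ∀ γ e, 0 ≤ N γ e) (hrow : ∀ γ, ∃ e, 0 < N γ e)
    (σ : E → ℝ) (hσ : ∀ e, 0 < σ e)
    (p₁ p₂ : ℝ) (hp₁ : 1 ≤ p₁) (hp₁₂ : p₁ ≤ p₂) :
    ((∑ e, σ e)⁻¹ * pModulus N σ p₁) ^ (1 / p₁) ≤
      ((∑ e, σ e)⁻¹ * pModulus N σ p₂) ^ (1 / p₂) := by
  have hσ₀ : ∀ e, 0 ≤ σ e := fun e => (hσ e).le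
  have hp₁₀ : 0 < p₁ := zero_lt_one.trans_le hp₁
  have hp₂₀ : 0 < p₂ := hp₁₀.trans_le hp₁₂
  have hM₁ : 0 ≤ (∑ e, σ e)⁻¹ * pModulus N σ p₁ :=
    mul_nonneg (inv_nonneg.mpr (sum_nonneg fun e _ => hσ₀ e)) (pModulus_nonneg hσ₀ p₁)
  calc ((∑ e, σ e)⁻¹ * pModulus N σ p₁) ^ (1 / p₁)
      = (((∑ e, σ e)⁻¹ * pModulus N σ p₁) ^ (p₂ / p₁)) ^ (1 / p₂) := by
        rw [← Real.rpow_mul hM₁]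
        congr 1
        field_simp
    _ ≤ ((∑ e, σ e)⁻¹ * pModulus N σ p₂) ^ (1 / p₂) := by
        gcongr
        exact rpow_normalized_pModulus_le hN hrow hσ₀ hp₁₀ hp₁₂

/-- `p ↦ (σ(E)⁻¹ Mod_{p,σ}(Γ))^(1/p)` is nondecreasing on `[1,∞)`. -/
theorem modulus_normalized_monotone
    {E Γ : Type*} [Fintype E] [Fintype Γ] [Nonempty E] [Nonempty Γ]
    (N : Γ → E → ℝ) (hN : ∀ γ e, 0 ≤ N γ e) (hrow : ∀ γ, ∃ e, 0 < N γ e)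
    (σ : E → ℝ) (hσ : ∀ e, 0 < σ e)
    (p₁ p₂ : ℝ) (hp₁ : 1 ≤ p₁) (hp₁₂ : p₁ ≤ p₂) :
    ((∑ e, σ e)⁻¹ * pModulus N σ p₁) ^ (1 / p₁) ≤
      ((∑ e, σ e)⁻¹ * pModulus N σ p₂) ^ (1 / p₂) :=
  modulus_normalized_monotone_general N hN hrow σ hσ p₁ p₂ hp₁ hp₁₂
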